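/- arXiv:0905.4435 — 4 statements merged into one kernel-verified Lean document; each statement's English description precedes it below -/
import Mathlib

section
/- The causal complement of the right wedge is the closed opposite wedge: the set of points x ∈ ℝ⁴ that are causally disjoint from every point of W equals {x ∈ ℝ⁴ : x₃ ≤ −|x₀|}. That is, {x : ∀ y, y₃ > |y₀| → q(x − y) ≤ 0} = {x : x₃ ≤ −|x₀|}. -/
/-- Minkowski square on ℝ⁴. -/
noncomputable def q (x : Fin 4 → ℝ) : ℝ := x 0 ^ 2 - x 1 ^ 2 - x 2 ^ 2 - x 3 ^ 2

/-! Taking `y₁ = x₁, y₂ = x₂` only makes `q (x - y)` larger, so the question reduces to the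
`(x₀, x₃)`-plane, where `x` must be spacelike or lightlike to every point of the open wedge
`|t| < z`; testing against the points `(±|x₃|, |x₃| + ε)` forces `x₃ + |x₀| ≤ ε`. -/

theorem q_le_sq_sub_sq (v : Fin 4 → ℝ) : q v ≤ v 0 ^ 2 - v 3 ^ 2 := by
  unfold q
  nlinarith [sq_nonneg (v 1), sq_nonneg (v 2)]

theorem q_sub_le_zero_iff_abs_le (x y : Fin 4 → ℝ) (h₁ : y 1 = x 1) (h₂ : y 2 = x 2) :
    q (x - y) ≤ 0 ↔ |x 0 - y 0| ≤ |x 3 - y 3| := by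
  simp only [q, Pi.sub_apply, h₁, h₂, sub_self]
  rw [← sq_le_sq]
  constructor <;> intro h <;> linarith

theorem forall_wedge_q_sub_nonpos_iff (x : Fin 4 → ℝ) :
    (∀ y : Fin 4 → ℝ, |y 0| < y 3 → q (x - y) ≤ 0) ↔
      ∀ t z : ℝ, |t| < z → |x 0 - t| ≤ |x 3 - z| := by
  constructor
  · intro h t z htz
    exact (q_sub_le_zero_iff_abs_le x ![t, x 1, x 2, z] rfl rfl).mp (h _ htz)
  · intro h y hy
    have hsq : (x 0 - y 0) ^ 2 ≤ (x 3 - y 3) ^ 2 := sq_le_sq.mpr (h _ _ hy)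
    calc q (x - y) ≤ (x 0 - y 0) ^ 2 - (x 3 - y 3) ^ 2 := q_le_sq_sub_sq (x - y)
      _ ≤ 0 := sub_nonpos.mpr hsq

theorem forall_abs_lt_abs_sub_le_abs_sub_iff (a b : ℝ) :
    (∀ t z : ℝ, |t| < z → |a - t| ≤ |b - z|) ↔ b ≤ -|a| := by
  constructor
  · intro h
    refine le_of_forall_pos_le_add fun ε hε => ?_
    have hz : |b - (|b| + ε)| = |b| + ε - b := by
      rw [abs_sub_comm, abs_of_nonneg (by linarith [le_abs_self b])]
    have hplus := h (-|b|) (|b| + ε) (by rw [abs_neg, abs_abs]; linarith)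
    have hminus := h |b| (|b| + ε) (by rw [abs_abs]; linarith)
    rw [hz] at hplus hminus
    -- whichever of `±|b|` has sign opposite to `a` gives `|a| + |b| ≤ |b| + ε - b`
    cases abs_cases a <;> cases abs_cases (a - |b|) <;> cases abs_cases (a - -|b|) <;> linarith
  · intro hb t z htz
    calc |a - t| ≤ |a| + |t| := abs_sub _ _
      _ ≤ z - b := by linarith
      _ ≤ |b - z| := by rw [abs_sub_comm]; exact le_abs_self _

/-- The causal complement of the right wedge `W = {x | x 3 > |x 0|}` is the closed
opposite wedge `{x | x 3 ≤ -|x 0|}`. -/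
theorem causal_complement_of_wedge :
    {x : Fin 4 → ℝ | ∀ y : Fin 4 → ℝ, y 3 > |y 0| → q (x - y) ≤ 0} =
      {x : Fin 4 → ℝ | x 3 ≤ -|x 0|} := by
  ext x
  exact (forall_wedge_q_sub_nonpos_iff x).trans (forall_abs_lt_abs_sub_le_abs_sub_iff _ _)
end

section
/- Let a > 0 and let l = (1,0,0,1) be the upper lightlike direction, so W + a·l = {y ∈ ℝ⁴ : y₃ − a > |y₀ − a|}. Then the relative causal complement of the translated wedge inside the closed wedge is a lightlike slab of extension (0,a) on the upper horizon: {x ∈ ℝ⁴ : x₃ ≥ |x₀| and ∀ y, (y₃ − a > |y₀ − a|) → q(x − y) ≤ 0} = {x ∈ ℝ⁴ : x₀ = x₃ and 0 ≤ x₀ ≤ a}, with the transverse coordinates x₁, x₂ unrestricted. -/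
/-- For `a > 0`, the relative causal complement of the lightlike-translated wedge
`W + a·l` (with `l = (1,0,0,1)`) inside the closed wedge is the lightlike slab of
extension `(0,a)` on the upper horizon, with transverse coordinates unrestricted. -/
theorem relative_causal_complement_is_light_slab (a : ℝ) (ha : 0 < a) :
    {x : Fin 4 → ℝ | x 3 ≥ |x 0| ∧ ∀ y : Fin 4 → ℝ, y 3 - a > |y 0 - a| → q (x - y) ≤ 0} =
      {x : Fin 4 → ℝ | x 0 = x 3 ∧ 0 ≤ x 0 ∧ x 0 ≤ a} := by
  ext x
  simp only [Set.mem_setOf_eq]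
  constructor
  · rintro ⟨hx, hq⟩
    have key : ∀ p r : ℝ, r - a > |p - a| → (x 0 - p) ^ 2 ≤ (x 3 - r) ^ 2 := by
      intro p r h
      have := hq ![p, x 1, x 2, r] (by simpa using h)
      simp only [q, Pi.sub_apply, Matrix.cons_val_zero, Matrix.cons_val_one, Matrix.head_cons,
        Matrix.cons_val_two, Matrix.tail_cons, Matrix.cons_val_three] at this
      nlinarith [this]
    have h30 : x 3 ≤ x 0 := by
      by_contra h
      push_neg at h
      set ε := (x 3 - x 0) / 2 with hε
      set p := max a (x 3) + 1 with hp
      have hpa : a ≤ p := le_trans (le_max_left _ _) (by linarith [le_refl p])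
      have hp3 : x 3 + 1 ≤ p := by
        have := le_max_right a (x 3); linarith
      have habs : |p - a| = p - a := abs_of_nonneg (by linarith)
      have hk := key p (p + ε) (by rw [habs]; linarith)
      nlinarith [hk]
    have h03 : x 0 = x 3 := le_antisymm (le_trans (le_abs_self _) hx) h30
    have h0 : 0 ≤ x 0 := by
      have := le_abs_self (x 0)
      have := hx
      rcases abs_cases (x 0) with ⟨h1, h2⟩ | ⟨h1, h2⟩
      · linarith
      · rw [h1] at hx; linarith
    refine ⟨h03, h0, ?_⟩
    by_contra h
    push_neg at h
    set ε := (x 0 - a) / 2 with hε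
    have hk := key a (a + ε) (by simpa using by linarith)
    nlinarith [hk]
  · rintro ⟨h03, h0, haa⟩
    constructor
    · rw [abs_of_nonneg h0]; linarith
    · intro y hy
      have h1 : y 0 - a ≤ |y 0 - a| := le_abs_self _
      have h2 : -(y 0 - a) ≤ |y 0 - a| := neg_le_abs _
      simp only [q, Pi.sub_apply]
      nlinarith [sq_nonneg (x 1 - y 1), sq_nonneg (x 2 - y 2),
        mul_pos (show (0:ℝ) < y 3 + y 0 - 2 * x 0 by linarith)
          (show (0:ℝ) < y 3 - y 0 by linarith)]
end

section
/- The conformal map from the wedge to the unit double cone: the map φ(x) = −(x + ½e₃)/q(x + ½e₃) − e₃ (which is well defined on W since q(x + ½e₃) < 0 there) is injective on W and maps W onto the open double cone of radius 1 centered at the origin, φ(W) = O₁ = {x ∈ ℝ⁴ : |x₀| + √(x₁² + x₂² + x₃²) < 1}. -/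
/-- The open right wedge in ℝ⁴. -/
def W : Set (Fin 4 → ℝ) := {x | x 3 > |x 0|}

/-- The unit vector in the 3-direction. -/
noncomputable def e3 : Fin 4 → ℝ := ![0, 0, 0, 1]

/-- The conformal map `φ(x) = ρ(x + ½e₃) − e₃` with `ρ(y) = −y/q(y)`. -/
noncomputable def φ (x : Fin 4 → ℝ) : Fin 4 → ℝ :=
  (-(q (x + (1/2 : ℝ) • e3))⁻¹) • (x + (1/2 : ℝ) • e3) - e3

/-- The open unit double cone centered at the origin. -/
noncomputable def O₁ : Set (Fin 4 → ℝ) :=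
  {x | |x 0| + Real.sqrt (x 1 ^ 2 + x 2 ^ 2 + x 3 ^ 2) < 1}

/-!
Write `φ = τ₋ₑ₃ ∘ ρ ∘ τ_{e₃/2}`, with `ρ` the Minkowski inversion and `τ` translations. The
inversion is an involution off the light cone and preserves the sign of `q`. For `q y < 0` put
`s = -1/q(y) > 0`, so that `ρ y = s y` and `s² q(y) = -s`; squaring out the condition
`|u₀| + ‖u⃗‖ < 1` for `u = ρ y - e₃` turns it into `s < 2s (y₃ - |y₀|)`, i.e. `y - ½e₃ ∈ W`.
Since both `W + ½e₃` and `O₁ + e₃` lie in `{q < 0}`, `ρ` matches them up bijectively.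
-/

noncomputable def ρ (y : Fin 4 → ℝ) : Fin 4 → ℝ := (-(q y)⁻¹) • y

lemma ρ_apply (y : Fin 4 → ℝ) (i : Fin 4) : ρ y i = -(q y)⁻¹ * y i := rfl

lemma φ_eq_ρ (x : Fin 4 → ℝ) : φ x = ρ (x + (1/2 : ℝ) • e3) - e3 := rfl

lemma q_smul (c : ℝ) (y : Fin 4 → ℝ) : q (c • y) = c ^ 2 * q y := by
  simp only [q, Pi.smul_apply, smul_eq_mul]; ring

lemma q_ρ (y : Fin 4 → ℝ) : q (ρ y) = (q y)⁻¹ := by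
  rw [ρ, q_smul, neg_sq, sq]
  simpa only [inv_inv] using mul_self_mul_inv (q y)⁻¹

lemma ρ_ρ {y : Fin 4 → ℝ} (hy : q y ≠ 0) : ρ (ρ y) = y := by
  rw [ρ, q_ρ, inv_inv, ρ, smul_smul, neg_mul_neg, mul_inv_cancel₀ hy, one_smul]

lemma ρ_injOn : Set.InjOn ρ {y | q y ≠ 0} :=
  Set.LeftInvOn.injOn fun _ hy ↦ ρ_ρ hy

lemma q_neg_of_abs_lt {y : Fin 4 → ℝ} (h : |y 0| < y 3) : q y < 0 := by
  have : y 0 ^ 2 < y 3 ^ 2 := sq_lt_sq' (abs_lt.mp h).1 (abs_lt.mp h).2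
  simp only [q]
  nlinarith [sq_nonneg (y 1), sq_nonneg (y 2)]

lemma mem_O₁_iff {u : Fin 4 → ℝ} :
    u ∈ O₁ ↔ |u 0| < 1 ∧ u 1 ^ 2 + u 2 ^ 2 + u 3 ^ 2 < (1 - |u 0|) ^ 2 := by
  change |u 0| + √_ < 1 ↔ _
  rw [← lt_sub_iff_add_lt']
  refine ⟨fun h ↦ ?_, fun ⟨h₀, h⟩ ↦ (Real.sqrt_lt' (sub_pos.mpr h₀)).mpr h⟩
  have h_pos := (Real.sqrt_nonneg _).trans_lt h
  exact ⟨sub_pos.mp h_pos, (Real.sqrt_lt' h_pos).mp h⟩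

lemma abs_add_abs_lt_of_mem_O₁ {u : Fin 4 → ℝ} (hu : u ∈ O₁) : |u 0| + |u 3| < 1 := by
  have h3 : |u 3| ≤ √(u 1 ^ 2 + u 2 ^ 2 + u 3 ^ 2) := by
    rw [← Real.sqrt_sq_eq_abs]
    exact Real.sqrt_le_sqrt (by nlinarith [sq_nonneg (u 1), sq_nonneg (u 2)])
  exact (add_le_add_right h3 _).trans_lt hu

lemma ρ_sub_e3_mem_O₁_iff {y : Fin 4 → ℝ} (hy : q y < 0) :
    ρ y - e3 ∈ O₁ ↔ y - (1/2 : ℝ) • e3 ∈ W := by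
  set s := -(q y)⁻¹ with hs
  have hs_pos : 0 < s := neg_pos.mpr (inv_lt_zero.mpr hy)
  have hs_q : s * q y = -1 := by rw [hs, neg_mul, inv_mul_cancel₀ hy.ne]
  have key : (1 - s * |y 0|) ^ 2 - ((s * y 1) ^ 2 + (s * y 2) ^ 2 + (s * y 3 - 1) ^ 2)
      = s * (2 * (y 3 - |y 0|) - 1) := by
    simp only [q] at hs_q
    linear_combination s * hs_q + s ^ 2 * sq_abs (y 0)
  have h_abs : |s * y 0| = s * |y 0| := by rw [abs_mul, abs_of_pos hs_pos]
  simp only [mem_O₁_iff, W, Set.mem_ofPred_eq, Pi.sub_apply, Pi.smul_apply, smul_eq_mul,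
    ρ_apply, ← hs, e3, Matrix.cons_val, mul_zero, sub_zero, mul_one, h_abs]
  constructor
  · rintro ⟨-, h⟩
    have := (mul_pos_iff_of_pos_left hs_pos).mp (key ▸ sub_pos.mpr h)
    linarith
  · intro h
    refine ⟨?_, sub_pos.mp (key ▸ mul_pos hs_pos (by linarith))⟩
    have h_lt : |y 0| < -q y := by
      simp only [q]
      nlinarith [sq_abs (y 0), abs_nonneg (y 0), sq_nonneg (y 1), sq_nonneg (y 2)]
    calc s * |y 0| < s * -q y := mul_lt_mul_of_pos_left h_lt hs_pos
      _ = 1 := by linarith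

lemma q_add_half_e3_neg_of_mem_W {x : Fin 4 → ℝ} (hx : x ∈ W) : q (x + (1/2 : ℝ) • e3) < 0 := by
  have hx : |x 0| < x 3 := hx
  apply q_neg_of_abs_lt
  simp only [Pi.add_apply, Pi.smul_apply, e3, Matrix.cons_val, smul_eq_mul, mul_zero, add_zero,
    mul_one]
  linarith

lemma q_add_e3_neg_of_mem_O₁ {u : Fin 4 → ℝ} (hu : u ∈ O₁) : q (u + e3) < 0 := by
  apply q_neg_of_abs_lt
  simp only [Pi.add_apply, e3, Matrix.cons_val, add_zero]
  linarith [abs_add_abs_lt_of_mem_O₁ hu, neg_abs_le (u 3)]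

/-- The conformal map `φ` is injective on the wedge `W` and maps it onto the open
unit double cone `O₁`. -/
theorem conformal_map_wedge_to_double_cone :
    Set.InjOn φ W ∧ φ '' W = O₁ := by
  refine ⟨fun x hx x' hx' h ↦ ?_, Set.Subset.antisymm ?_ fun u hu ↦ ?_⟩
  · rw [φ_eq_ρ, φ_eq_ρ, sub_left_inj] at h
    simpa only [add_left_inj] using ρ_injOn (q_add_half_e3_neg_of_mem_W hx).ne
      (q_add_half_e3_neg_of_mem_W hx').ne h
  · rintro _ ⟨x, hx, rfl⟩
    exact (ρ_sub_e3_mem_O₁_iff (q_add_half_e3_neg_of_mem_W hx)).mpr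
      (by rwa [add_sub_cancel_right])
  · have hv := q_add_e3_neg_of_mem_O₁ hu
    have hρv : q (ρ (u + e3)) < 0 := by rwa [q_ρ, inv_lt_zero]
    have hu' : ρ (ρ (u + e3)) - e3 ∈ O₁ := by rwa [ρ_ρ hv.ne, add_sub_cancel_right]
    refine ⟨_, (ρ_sub_e3_mem_O₁_iff hρv).mp hu', ?_⟩
    rw [φ_eq_ρ, sub_add_cancel, ρ_ρ hv.ne, add_sub_cancel_right]
end

section
/- Parametrization of the image of the wedge horizon under the conformal map: for every t > 0 and (x₁,x₂) ∈ ℝ², the horizon point (t, x₁, x₂, t) satisfies φ(t, x₁, x₂, t) = (τ, (1−τ)·e), where τ = t/(t + x₁² + x₂² + ¼) ∈ (0,1) and e = (x₁, x₂, ¼ − x₁² − x₂²)/(x₁² + x₂² + ¼) ∈ ℝ³. In particular the image point lies on the upper null mantle of the unit double cone: its time component τ satisfies 0 < τ < 1 and τ + ‖(1−τ)·e‖ = 1. -/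
/-!
A horizon point `(t, x, t)` is null, so after the shift by `½e₃` its Minkowski square is
`−(t + |x|² + ¼)`, and `φ` becomes division by this positive number followed by `− e₃`.
Writing `R = |x|² + ¼`, one has `1 − τ = R/(t + R)`, which yields the stated parametrization,
and `e = (x, ¼ − |x|²)/R` is a unit vector because `|x|² + (¼ − |x|²)² = (|x|² + ¼)²`;
hence `‖(1 − τ)e‖ = 1 − τ`.
-/

lemma q_vecCons (a b c d : ℝ) : q ![a, b, c, d] = a ^ 2 - b ^ 2 - c ^ 2 - d ^ 2 := rfl

lemma add_half_smul_e3 (a b c d : ℝ) :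
    ![a, b, c, d] + (1/2 : ℝ) • e3 = ![a, b, c, d + 1/2] := by
  ext i; fin_cases i <;> simp [e3]

lemma φ_vecCons (a b c d : ℝ) :
    φ ![a, b, c, d] = (-(q ![a, b, c, d + 1/2])⁻¹) • ![a, b, c, d + 1/2] - e3 := by
  rw [φ, add_half_smul_e3]

lemma q_horizon_add_half (t x₁ x₂ : ℝ) :
    q ![t, x₁, x₂, t + 1/2] = -(t + (x₁ ^ 2 + x₂ ^ 2) + 1/4) := by
  rw [q_vecCons]; ring

lemma φ_horizon {t x₁ x₂ r : ℝ} (hr : x₁ ^ 2 + x₂ ^ 2 = r) (hD : t + r + 1/4 ≠ 0) :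
    φ ![t, x₁, x₂, t] = (t + r + 1/4)⁻¹ • ![t, x₁, x₂, 1/4 - r] := by
  calc φ ![t, x₁, x₂, t]
      = (t + r + 1/4)⁻¹ • ![t, x₁, x₂, t + 1/2] - e3 := by
        rw [φ_vecCons, q_horizon_add_half, hr, inv_neg, neg_neg]
    _ = (t + r + 1/4)⁻¹ • (![t, x₁, x₂, t + 1/2] - (t + r + 1/4) • e3) := by
        rw [smul_sub, smul_smul, inv_mul_cancel₀ hD, one_smul]
    _ = (t + r + 1/4)⁻¹ • ![t, x₁, x₂, 1/4 - r] := by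
        congr 1
        ext i; fin_cases i <;> simp [e3]
        ring

lemma sq_add_sq_add_sub_sq (x₁ x₂ : ℝ) :
    x₁ ^ 2 + x₂ ^ 2 + (1/4 - (x₁ ^ 2 + x₂ ^ 2)) ^ 2 = (x₁ ^ 2 + x₂ ^ 2 + 1/4) ^ 2 := by
  ring

lemma div_add_mem_Ioo {t c : ℝ} (ht : 0 < t) (hc : 0 < c) : t / (t + c) ∈ Set.Ioo 0 1 :=
  ⟨by positivity, (div_lt_one (by positivity)).2 (by linarith)⟩

lemma one_sub_div_add {t c : ℝ} (h : t + c ≠ 0) : 1 - t / (t + c) = c / (t + c) := by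
  rw [one_sub_div h, add_sub_cancel_left]

lemma add_sqrt_sum_sq_one_sub_mul {τ a b c : ℝ} (hτ : τ ≤ 1) (habc : a ^ 2 + b ^ 2 + c ^ 2 = 1) :
    τ + Real.sqrt (((1 - τ) * a) ^ 2 + ((1 - τ) * b) ^ 2 + ((1 - τ) * c) ^ 2) = 1 := by
  have : ((1 - τ) * a) ^ 2 + ((1 - τ) * b) ^ 2 + ((1 - τ) * c) ^ 2 = (1 - τ) ^ 2 := by
    linear_combination (1 - τ) ^ 2 * habc
  rw [this, Real.sqrt_sq (by linarith)]
  ring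

/-- The horizon point `(t,x₁,x₂,t)` with `t > 0` is mapped by `φ` to
`(τ, (1−τ)·e)` with `τ = t/(t + x₁² + x₂² + ¼)` and
`e = (x₁, x₂, ¼ − x₁² − x₂²)/(x₁² + x₂² + ¼)`; the image lies on the upper null
mantle of the unit double cone: `0 < τ < 1` and `τ + ‖(1−τ)·e‖ = 1`. -/
theorem horizon_maps_to_mantle (t x₁ x₂ : ℝ) (ht : 0 < t) :
    let r := x₁ ^ 2 + x₂ ^ 2
    let τ := t / (t + r + 1/4)
    φ ![t, x₁, x₂, t] =
      ![τ, (1 - τ) * (x₁ / (r + 1/4)), (1 - τ) * (x₂ / (r + 1/4)),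
        (1 - τ) * ((1/4 - r) / (r + 1/4))] ∧
    0 < τ ∧ τ < 1 ∧
    τ + Real.sqrt (((1 - τ) * (x₁ / (r + 1/4))) ^ 2 +
        ((1 - τ) * (x₂ / (r + 1/4))) ^ 2 +
        ((1 - τ) * ((1/4 - r) / (r + 1/4))) ^ 2) = 1 := by
  intro r τ
  have hunit : x₁ ^ 2 + x₂ ^ 2 + (1/4 - r) ^ 2 = (r + 1/4) ^ 2 := sq_add_sq_add_sub_sq x₁ x₂
  have hR : 0 < r + 1/4 := by positivity
  have hφ := φ_horizon (r := r) rfl (by positivity : t + r + 1/4 ≠ 0)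
  have hτ : τ = t / (t + (r + 1/4)) := by rw [← add_assoc]
  clear_value r τ
  obtain ⟨hτ0, hτ1⟩ : τ ∈ Set.Ioo 0 1 := hτ ▸ div_add_mem_Ioo ht hR
  have h1τ : 1 - τ = (r + 1/4) / (t + (r + 1/4)) := by
    rw [hτ, one_sub_div_add (by positivity)]
  refine ⟨?_, hτ0, hτ1, add_sqrt_sum_sq_one_sub_mul hτ1.le ?_⟩
  · rw [hφ, h1τ, hτ, ← add_assoc]
    simp only [Matrix.smul_cons, smul_eq_mul, Matrix.smul_empty, inv_mul_eq_div,
      div_mul_div_cancel₀' hR.ne']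
  · rw [div_pow, div_pow, div_pow, ← add_div, ← add_div, hunit, div_self (by positivity)]
end
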